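/- Let C_1, ..., C_N ⊆ R^m be closed convex cones contained in a pointed closed convex cone C, let p ∈ R^m and q ∈ (C_1 + ... + C_N) \ {0}. Then sup { λ : p − λq ∈ C_1 + ... + C_N } = inf { ⟨p, v⟩ : v ∈ C_1* ∩ ... ∩ C_N*, ⟨q, v⟩ = 1 }, provided C_1 + ... + C_N is closed. -/

import Mathlib

/-!
The Minkowski sum `S = C₁ + ⋯ + C_N` is a closed convex cone whose inner dual is
`C₁* ∩ ⋯ ∩ C_N*`, so the claim is conic linear programming duality for `S`. Weak duality is
immediate. Conversely, if `p - b • q ∉ S`, Farkas' lemma gives `y ∈ S*` with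
`⟪p - b • q, y⟫ < 0`. As `S ⊆ C` is pointed, `-q ∉ S`, and Farkas' lemma again gives a dual
feasible `v₀`; normalising `v₀ + t • y` for large `t` then gives a dual feasible point of value
`< b`. Hence every `b` above the primal supremum exceeds a dual value, which forces equality.
-/

open scoped RealInnerProductSpace

theorem Submodule.mem_iSup_iff_exists_fun {R N ι : Type*} [Semiring R] [AddCommMonoid N]
    [Module R N] [Fintype ι] (p : ι → Submodule R N) (x : N) :
    x ∈ iSup p ↔ ∃ f : ι → N, (∀ i, f i ∈ p i) ∧ ∑ i, f i = x := by
  rw [mem_iSup_iff_exists_finsupp]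
  constructor
  · rintro ⟨f, hf, rfl⟩
    exact ⟨f, hf, (Finsupp.sum_fintype f (fun _ xi => xi) fun _ => rfl).symm⟩
  · rintro ⟨f, hf, rfl⟩
    exact ⟨Finsupp.equivFunOnFinite.symm f, hf, Finsupp.sum_fintype _ _ fun _ => rfl⟩

theorem Convex.add_mem_of_smul_mem {E : Type*} [AddCommGroup E] [Module ℝ E] {s : Set E}
    (hs : Convex ℝ s) (hsmul : ∀ c : ℝ, 0 ≤ c → ∀ x ∈ s, c • x ∈ s) {x y : E}
    (hx : x ∈ s) (hy : y ∈ s) : x + y ∈ s := by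
  have hmid := hs hx hy (by norm_num : (0 : ℝ) ≤ 1 / 2) (by norm_num : (0 : ℝ) ≤ 1 / 2)
    (by norm_num)
  convert hsmul 2 zero_le_two _ hmid using 1
  module

namespace PointedCone

variable {E : Type*} [AddCommGroup E] [Module ℝ E]

def ofConvex {s : Set E} (hs : Convex ℝ s) (hsmul : ∀ c : ℝ, 0 ≤ c → ∀ x ∈ s, c • x ∈ s)
    (h0 : 0 ∈ s) : PointedCone ℝ E where
  carrier := s
  add_mem' := hs.add_mem_of_smul_mem hsmul
  zero_mem' := h0
  smul_mem' c _ hx := hsmul c c.2 _ hx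

@[simp]
theorem mem_ofConvex {s : Set E} (hs : Convex ℝ s) (hsmul : ∀ c : ℝ, 0 ≤ c → ∀ x ∈ s, c • x ∈ s)
    (h0 : 0 ∈ s) {x : E} : x ∈ ofConvex hs hsmul h0 ↔ x ∈ s := .rfl

end PointedCone

/-- This includes the junk cases where both sides are `0`: if `A = ∅` then `B` is unbounded
below, and if `A` is unbounded above then `B = ∅`. -/
theorem Real.sSup_eq_sInf_of_forall_le_of_forall_notMem {A B : Set ℝ}
    (hle : ∀ a ∈ A, ∀ b ∈ B, a ≤ b) (hgap : ∀ x ∉ A, ∃ b ∈ B, b < x) : sSup A = sInf B := by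
  rcases A.eq_empty_or_nonempty with rfl | ⟨a, ha⟩
  · have hB : ¬BddBelow B := fun ⟨x, hx⟩ =>
      let ⟨_, hb, hbx⟩ := hgap x (Set.notMem_empty x)
      (hx hb).not_gt hbx
    rw [Real.sSup_empty, Real.sInf_of_not_bddBelow hB]
  by_cases hA : BddAbove A
  · have hgt : ∀ x, sSup A < x → ∃ b ∈ B, b < x := fun x hx =>
      hgap x fun h => (le_csSup hA h).not_gt hx
    obtain ⟨b, hb, -⟩ := hgt _ (lt_add_one (sSup A))
    refine le_antisymm (le_csInf ⟨b, hb⟩ fun b hb => csSup_le ⟨a, ha⟩ fun a ha => hle a ha b hb)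
      (le_of_forall_gt fun x hx => ?_)
    obtain ⟨b, hb, hbx⟩ := hgt x hx
    exact (csInf_le ⟨a, fun b hb => hle a ha b hb⟩ hb).trans_lt hbx
  · have hB : B = ∅ := Set.eq_empty_of_forall_notMem fun b hb => hA ⟨b, fun a ha => hle a ha b hb⟩
    rw [Real.sSup_of_not_bddAbove hA, hB, Real.sInf_empty]

namespace ProperCone

variable {E : Type*} [NormedAddCommGroup E] [InnerProductSpace ℝ E] [CompleteSpace E]

theorem mem_innerDual_iSup {ι : Sort*} {K : ι → PointedCone ℝ E} {v : E} :
    v ∈ innerDual ((⨆ i, K i : PointedCone ℝ E) : Set E) ↔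
      ∀ i, v ∈ innerDual (K i : Set E) := by
  refine ⟨fun hv i => innerDual_le_innerDual (SetLike.coe_subset_coe.2 (le_iSup K i)) hv,
    fun hv => ?_⟩
  have hle : (⨆ i, K i) ≤ (innerDual {v} : PointedCone ℝ E) :=
    iSup_le fun i x hx => by simpa [real_inner_comm] using hv i hx
  intro x hx
  simpa [real_inner_comm] using hle hx

theorem le_inner_of_sub_smul_mem {s : Set E} {p q v : E} {lam : ℝ} (hv : v ∈ innerDual s)
    (hqv : ⟪q, v⟫ = 1) (hlam : p - lam • q ∈ s) : lam ≤ ⟪p, v⟫ := by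
  have : 0 ≤ ⟪p - lam • q, v⟫ := hv hlam
  rw [inner_sub_left, real_inner_smul_left, hqv] at this
  linarith

theorem exists_inner_lt_of_inner_sub_smul_neg {s : Set E} {p q w : E} {b : ℝ}
    (hw : w ∈ innerDual s) (hqw : 0 < ⟪q, w⟫) (hpw : ⟪p - b • q, w⟫ < 0) :
    ∃ v ∈ innerDual s, ⟪q, v⟫ = 1 ∧ ⟪p, v⟫ < b := by
  refine ⟨⟪q, w⟫⁻¹ • w, (innerDual s).smul_mem hw (inv_nonneg.2 hqw.le), ?_, ?_⟩
  · rw [real_inner_smul_right, inv_mul_cancel₀ hqw.ne']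
  · rw [inner_sub_left, real_inner_smul_left] at hpw
    rw [real_inner_smul_right, inv_mul_lt_iff₀ hqw]
    linarith

theorem exists_inner_eq_one_of_neg_notMem (K : ProperCone ℝ E) {q : E} (hq : -q ∉ K) :
    ∃ v ∈ innerDual (K : Set E), ⟪q, v⟫ = 1 := by
  obtain ⟨y, hyK, hqy⟩ := K.hyperplane_separation' hq
  rw [inner_neg_left, neg_lt_zero] at hqy
  obtain ⟨v, hv, hqv, -⟩ := exists_inner_lt_of_inner_sub_smul_neg (p := 0) (b := 1)
    (fun x hx => hyK x hx) hqy (by simpa using hqy)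
  exact ⟨v, hv, hqv⟩

theorem exists_inner_lt_of_sub_smul_notMem (K : ProperCone ℝ E) {p q v₀ : E} {b : ℝ}
    (hq : q ∈ K) (hv₀ : v₀ ∈ innerDual (K : Set E)) (hqv₀ : ⟪q, v₀⟫ = 1)
    (hb : p - b • q ∉ K) : ∃ v ∈ innerDual (K : Set E), ⟪q, v⟫ = 1 ∧ ⟪p, v⟫ < b := by
  obtain ⟨y, hyK, hsep⟩ := K.hyperplane_separation' hb
  have hy : y ∈ innerDual (K : Set E) := fun x hx => hyK x hx
  -- tilt `v₀` towards the separating functional until it also separates `p - b • q`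
  set a := ⟪p - b • q, v₀⟫
  set t := (|a| + 1) / -⟪p - b • q, y⟫
  have ht : 0 ≤ t := div_nonneg (by positivity) (by linarith)
  have hty : t * ⟪p - b • q, y⟫ = -(|a| + 1) := by
    simp only [t]
    field_simp [hsep.ne]
  refine exists_inner_lt_of_inner_sub_smul_neg (w := v₀ + t • y)
    (add_mem hv₀ ((innerDual _).smul_mem hy ht)) ?_ ?_
  · rw [inner_add_right, real_inner_smul_right, hqv₀]
    linarith [mul_nonneg ht (hyK q hq)]
  · rw [inner_add_right, real_inner_smul_right, hty]
    linarith [le_abs_self a]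

theorem sSup_sub_smul_mem_eq_sInf_inner (K : ProperCone ℝ E) {p q : E} (hq : q ∈ K)
    (hq' : -q ∉ K) :
    sSup {lam : ℝ | p - lam • q ∈ K} =
      sInf {r : ℝ | ∃ v ∈ innerDual (K : Set E), ⟪q, v⟫ = 1 ∧ r = ⟪p, v⟫} := by
  obtain ⟨v₀, hv₀, hqv₀⟩ := K.exists_inner_eq_one_of_neg_notMem hq'
  refine Real.sSup_eq_sInf_of_forall_le_of_forall_notMem ?_ fun b hb => ?_
  · rintro lam hlam _ ⟨v, hv, hqv, rfl⟩
    exact le_inner_of_sub_smul_mem hv hqv hlam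
  · obtain ⟨v, hv, hqv, hpv⟩ := K.exists_inner_lt_of_sub_smul_notMem hq hv₀ hqv₀ hb
    exact ⟨_, ⟨v, hv, hqv, rfl⟩, hpv⟩

end ProperCone

theorem sparse_conic_duality_general (m N : ℕ)
    (C : Set (EuclideanSpace ℝ (Fin m)))
    (hconv : Convex ℝ C)
    (hcone : ∀ c : ℝ, 0 ≤ c → ∀ x ∈ C, c • x ∈ C)
    (hpointed : C ∩ (-C) = {0})
    (Ci : Fin N → Set (EuclideanSpace ℝ (Fin m)))
    (hconvi : ∀ i, Convex ℝ (Ci i))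
    (hconei : ∀ i, ∀ c : ℝ, 0 ≤ c → ∀ x ∈ Ci i, c • x ∈ Ci i)
    (h0i : ∀ i, (0 : EuclideanSpace ℝ (Fin m)) ∈ Ci i)
    (hsub : ∀ i, Ci i ⊆ C)
    (hsumclosed : IsClosed {x : EuclideanSpace ℝ (Fin m) |
        ∃ f : Fin N → EuclideanSpace ℝ (Fin m), (∀ i, f i ∈ Ci i) ∧ x = ∑ i, f i})
    (p q : EuclideanSpace ℝ (Fin m))
    (hq : q ∈ {x : EuclideanSpace ℝ (Fin m) |
        ∃ f : Fin N → EuclideanSpace ℝ (Fin m), (∀ i, f i ∈ Ci i) ∧ x = ∑ i, f i})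
    (hq0 : q ≠ 0) :
    sSup {lam : ℝ | ∃ f : Fin N → EuclideanSpace ℝ (Fin m),
        (∀ i, f i ∈ Ci i) ∧ p - lam • q = ∑ i, f i}
      = sInf {r : ℝ | ∃ v : EuclideanSpace ℝ (Fin m),
          (∀ i, v ∈ (ProperCone.innerDual (Ci i) : Set (EuclideanSpace ℝ (Fin m)))) ∧
          (inner ℝ q v : ℝ) = 1 ∧ r = (inner ℝ p v : ℝ)} := by
  have h0C : (0 : EuclideanSpace ℝ (Fin m)) ∈ C := (hpointed.symm.subset rfl).1
  let Ki i := PointedCone.ofConvex (hconvi i) (hconei i) (h0i i)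
  let K := ⨆ i, Ki i
  have hK : (K : Set (EuclideanSpace ℝ (Fin m))) =
      {x | ∃ f : Fin N → EuclideanSpace ℝ (Fin m), (∀ i, f i ∈ Ci i) ∧ x = ∑ i, f i} := by
    ext x
    simp [K, Ki, Submodule.mem_iSup_iff_exists_fun, eq_comm]
  have hqK : q ∈ K := by rwa [← SetLike.mem_coe, hK]
  let Kp : ProperCone ℝ (EuclideanSpace ℝ (Fin m)) :=
    ⟨K, (hK.symm ▸ hsumclosed : IsClosed (K : Set (EuclideanSpace ℝ (Fin m))))⟩
  have hKC : K ≤ PointedCone.ofConvex hconv hcone h0C := iSup_le hsub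
  have hq' : -q ∉ Kp := fun hnq => hq0 <| by
    have : q ∈ C ∩ -C := ⟨hKC hqK, by simpa using hKC hnq⟩
    rwa [hpointed] at this
  have hprimal : {lam : ℝ | ∃ f : Fin N → EuclideanSpace ℝ (Fin m),
      (∀ i, f i ∈ Ci i) ∧ p - lam • q = ∑ i, f i} = {lam | p - lam • q ∈ Kp} :=
    Set.ext fun lam => (Set.ext_iff.1 hK _).symm
  have hdual : {r : ℝ | ∃ v : EuclideanSpace ℝ (Fin m),
      (∀ i, v ∈ (ProperCone.innerDual (Ci i) : Set (EuclideanSpace ℝ (Fin m)))) ∧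
      ⟪q, v⟫ = 1 ∧ r = ⟪p, v⟫} =
      {r | ∃ v ∈ ProperCone.innerDual (Kp : Set _), ⟪q, v⟫ = 1 ∧ r = ⟪p, v⟫} :=
    Set.ext fun r => exists_congr fun v =>
      and_congr_left' (ProperCone.mem_innerDual_iSup (K := Ki)).symm
  rw [hprimal, hdual]
  exact Kp.sSup_sub_smul_mem_eq_sInf_inner hqK hq'

/-- Sparse conic duality: for closed convex cones `C 1, …, C N` contained in a pointed closed
convex cone `C`, with `q` a nonzero element of the (closed) Minkowski sum,
`sup {λ : p − λq ∈ C₁ + ⋯ + C_N} = inf {⟨p,v⟩ : v ∈ C₁* ∩ ⋯ ∩ C_N*, ⟨q,v⟩ = 1}`. -/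
theorem sparse_conic_duality (m N : ℕ)
    (C : Set (EuclideanSpace ℝ (Fin m)))
    (hconv : Convex ℝ C) (hclosed : IsClosed C)
    (hcone : ∀ c : ℝ, 0 ≤ c → ∀ x ∈ C, c • x ∈ C)
    (hpointed : C ∩ (-C) = {0})
    (Ci : Fin N → Set (EuclideanSpace ℝ (Fin m)))
    (hconvi : ∀ i, Convex ℝ (Ci i)) (hclosedi : ∀ i, IsClosed (Ci i))
    (hconei : ∀ i, ∀ c : ℝ, 0 ≤ c → ∀ x ∈ Ci i, c • x ∈ Ci i)
    (h0i : ∀ i, (0 : EuclideanSpace ℝ (Fin m)) ∈ Ci i)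
    (hsub : ∀ i, Ci i ⊆ C)
    (hsumclosed : IsClosed {x : EuclideanSpace ℝ (Fin m) |
        ∃ f : Fin N → EuclideanSpace ℝ (Fin m), (∀ i, f i ∈ Ci i) ∧ x = ∑ i, f i})
    (p q : EuclideanSpace ℝ (Fin m))
    (hq : q ∈ {x : EuclideanSpace ℝ (Fin m) |
        ∃ f : Fin N → EuclideanSpace ℝ (Fin m), (∀ i, f i ∈ Ci i) ∧ x = ∑ i, f i})
    (hq0 : q ≠ 0) :
    sSup {lam : ℝ | ∃ f : Fin N → EuclideanSpace ℝ (Fin m),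
        (∀ i, f i ∈ Ci i) ∧ p - lam • q = ∑ i, f i}
      = sInf {r : ℝ | ∃ v : EuclideanSpace ℝ (Fin m),
          (∀ i, v ∈ (ProperCone.innerDual (Ci i) : Set (EuclideanSpace ℝ (Fin m)))) ∧
          (inner ℝ q v : ℝ) = 1 ∧ r = (inner ℝ p v : ℝ)} :=
  sparse_conic_duality_general m N C hconv hcone hpointed Ci hconvi hconei h0i hsub hsumclosed p q
    hq hq0
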